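/- arXiv:1908.03352 — 4 statements merged into one kernel-verified Lean document; each statement's English description precedes it below -/
import Mathlib

section
/- For C1 ≠ 0, the curves x(t) = (1/C1)(C3 - C2 sin(C1 t) - C3 cos(C1 t)), θ(t) = (1/C1)(C2 - C2 cos(C1 t) + C3 sin(C1 t)), together with y(t) = (1/(4C1²))(2C1(C2²+C3²)t - 4C2C3 cos(C1 t) + 2C2C3 cos(2C1 t) - 4C2² sin(C1 t) + (C2² - C3²) sin(2C1 t) + 2C2C3), satisfy ẋ = h2, ẏ = θ h2, θ̇ = h1 with h1 = C2 sin(C1 t) + C3 cos(C1 t), h2 = C3 sin(C1 t) - C2 cos(C1 t), and the initial condition x(0) = y(0) = θ(0) = 0. -/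
open Real

/-!
Each component is checked by differentiating its explicit formula. For `y` the one idea is
to linearize the product `θ h2` with the double-angle formulas: with `u = C1 t`,
`C2² cos² u + C3² sin² u = (C2² + C3²) / 2 + (C2² - C3²) cos (2u) / 2` and
`2 sin u cos u = sin (2u)`, which is exactly what the `t`, `cos (2 C1 t)` and
`sin (2 C1 t)` terms of `y` differentiate to.
-/

lemma hasDerivAt_sin_const_mul (c t : ℝ) :
    HasDerivAt (fun s => sin (c * s)) (c * cos (c * t)) t := by
  simpa [mul_comm] using ((hasDerivAt_id t).const_mul c).sin

lemma hasDerivAt_cos_const_mul (c t : ℝ) :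
    HasDerivAt (fun s => cos (c * s)) (-(c * sin (c * t))) t := by
  simpa [mul_comm] using ((hasDerivAt_id t).const_mul c).cos

lemma mul_sin_sub_cos_eq_double_angle (a b u : ℝ) :
    (a - a * cos u + b * sin u) * (b * sin u - a * cos u) =
      (a ^ 2 + b ^ 2) / 2 + a * b * sin u - a * b * sin (2 * u) - a ^ 2 * cos u
        + (a ^ 2 - b ^ 2) / 2 * cos (2 * u) := by
  rw [sin_two_mul, cos_two_mul]
  linear_combination b ^ 2 * sin_sq_add_cos_sq u

section HorizontalSystem

variable {C1 : ℝ}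

lemma hasDerivAt_horizontal_x (hC1 : C1 ≠ 0) (C2 C3 t : ℝ) :
    HasDerivAt (fun s => (1 / C1) * (C3 - C2 * sin (C1 * s) - C3 * cos (C1 * s)))
      (C3 * sin (C1 * t) - C2 * cos (C1 * t)) t := by
  refine (((hasDerivAt_const t C3).sub ((hasDerivAt_sin_const_mul C1 t).const_mul C2)).sub
    ((hasDerivAt_cos_const_mul C1 t).const_mul C3)).const_mul (1 / C1) |>.congr_deriv ?_
  field_simp
  ring

lemma hasDerivAt_horizontal_θ (hC1 : C1 ≠ 0) (C2 C3 t : ℝ) :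
    HasDerivAt (fun s => (1 / C1) * (C2 - C2 * cos (C1 * s) + C3 * sin (C1 * s)))
      (C2 * sin (C1 * t) + C3 * cos (C1 * t)) t := by
  refine (((hasDerivAt_const t C2).sub ((hasDerivAt_cos_const_mul C1 t).const_mul C2)).add
    ((hasDerivAt_sin_const_mul C1 t).const_mul C3)).const_mul (1 / C1) |>.congr_deriv ?_
  field_simp
  ring

lemma hasDerivAt_horizontal_y (hC1 : C1 ≠ 0) (C2 C3 t : ℝ) :
    HasDerivAt (fun s => (1 / (4 * C1 ^ 2)) *
      (2 * C1 * (C2 ^ 2 + C3 ^ 2) * s - 4 * C2 * C3 * cos (C1 * s)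
        + 2 * C2 * C3 * cos (2 * C1 * s) - 4 * C2 ^ 2 * sin (C1 * s)
        + (C2 ^ 2 - C3 ^ 2) * sin (2 * C1 * s) + 2 * C2 * C3))
      ((1 / C1) * (C2 - C2 * cos (C1 * t) + C3 * sin (C1 * t)) *
        (C3 * sin (C1 * t) - C2 * cos (C1 * t))) t := by
  refine (((((((hasDerivAt_const_mul (2 * C1 * (C2 ^ 2 + C3 ^ 2))).sub
    ((hasDerivAt_cos_const_mul C1 t).const_mul (4 * C2 * C3))).add
    ((hasDerivAt_cos_const_mul (2 * C1) t).const_mul (2 * C2 * C3))).sub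
    ((hasDerivAt_sin_const_mul C1 t).const_mul (4 * C2 ^ 2))).add
    ((hasDerivAt_sin_const_mul (2 * C1) t).const_mul (C2 ^ 2 - C3 ^ 2))).add
    (hasDerivAt_const t (2 * C2 * C3))).const_mul (1 / (4 * C1 ^ 2))) |>.congr_deriv ?_
  rw [mul_assoc (1 / C1), mul_sin_sub_cos_eq_double_angle, mul_assoc 2 C1 t]
  field_simp
  ring

end HorizontalSystem

/-- For `C1 ≠ 0`, the explicit curves `x(t), y(t), θ(t)` solve the horizontal system
`ẋ = h2`, `ẏ = θ h2`, `θ̇ = h1` with `h1 = C2 sin(C1 t) + C3 cos(C1 t)`,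
`h2 = C3 sin(C1 t) - C2 cos(C1 t)`, and satisfy `x(0) = y(0) = θ(0) = 0`. -/
theorem horizontal_system_solution (C1 C2 C3 : ℝ) (hC1 : C1 ≠ 0) :
    let h1 : ℝ → ℝ := fun t => C2 * sin (C1 * t) + C3 * cos (C1 * t)
    let h2 : ℝ → ℝ := fun t => C3 * sin (C1 * t) - C2 * cos (C1 * t)
    let x : ℝ → ℝ := fun t => (1 / C1) * (C3 - C2 * sin (C1 * t) - C3 * cos (C1 * t))
    let θ : ℝ → ℝ := fun t => (1 / C1) * (C2 - C2 * cos (C1 * t) + C3 * sin (C1 * t))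
    let y : ℝ → ℝ := fun t => (1 / (4 * C1 ^ 2)) *
      (2 * C1 * (C2 ^ 2 + C3 ^ 2) * t - 4 * C2 * C3 * cos (C1 * t)
        + 2 * C2 * C3 * cos (2 * C1 * t) - 4 * C2 ^ 2 * sin (C1 * t)
        + (C2 ^ 2 - C3 ^ 2) * sin (2 * C1 * t) + 2 * C2 * C3)
    (∀ t, HasDerivAt x (h2 t) t) ∧
    (∀ t, HasDerivAt y (θ t * h2 t) t) ∧
    (∀ t, HasDerivAt θ (h1 t) t) ∧
    x 0 = 0 ∧ y 0 = 0 ∧ θ 0 = 0 := by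
  intro h1 h2 x θ y
  refine ⟨hasDerivAt_horizontal_x hC1 C2 C3, hasDerivAt_horizontal_y hC1 C2 C3,
    hasDerivAt_horizontal_θ hC1 C2 C3, ?_, ?_, ?_⟩ <;>
    simp only [x, y, θ, mul_zero, sin_zero, cos_zero] <;> ring
end

section
/- Each of the four vector fields t0 = θ∂_x + ((θ² - x²)/2)∂_y - x∂_θ, t1 = ∂_x, t2 = x∂_y + ∂_θ, t3 = ∂_y on ℝ³ preserves the distribution spanned by n1 = ∂_θ and n2 = ∂_x + θ∂_y (i.e., the Lie bracket of each t_i with any section of the distribution is again a section of the distribution) and has vanishing Lie derivative of the sub-Riemannian metric r = dx² + dθ² restricted to the distribution. -/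
open Real

/-- The Lie bracket of vector fields on `ℝ³` (coordinates `(x, y, θ)` = indices `0,1,2`). -/
noncomputable def lieBracket (X Y : (Fin 3 → ℝ) → (Fin 3 → ℝ)) :
    (Fin 3 → ℝ) → (Fin 3 → ℝ) :=
  fun p => fderiv ℝ Y p (X p) - fderiv ℝ X p (Y p)

/-- `n1 = ∂_θ`. -/
def n1 : (Fin 3 → ℝ) → (Fin 3 → ℝ) := fun _ => ![0, 0, 1]

/-- `n2 = ∂_x + θ ∂_y`. -/
def n2 : (Fin 3 → ℝ) → (Fin 3 → ℝ) := fun p => ![1, p 2, 0]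

/-- The sub-Riemannian metric `r = dx² + dθ²` (making `n1, n2` orthonormal), as a
bilinear form on tangent vectors. -/
def rMet (u w : Fin 3 → ℝ) : ℝ := u 0 * w 0 + u 2 * w 2

/-- `v` preserves the distribution `𝒩 = span{n1, n2}`: brackets with the generators are
again (function-coefficient) sections of `𝒩`. -/
def PreservesDistribution (v : (Fin 3 → ℝ) → (Fin 3 → ℝ)) : Prop :=
  ∀ n, (n = n1 ∨ n = n2) → ∃ a b : (Fin 3 → ℝ) → ℝ,
    lieBracket v n = fun p => a p • n1 p + b p • n2 p

/-- The Lie derivative of `r` along `v` vanishes on the distribution: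
`v(r(nᵢ,nⱼ)) - r([v,nᵢ],nⱼ) - r(nᵢ,[v,nⱼ]) = 0` for `i, j ∈ {1,2}`. -/
def MetricLieDerivZero (v : (Fin 3 → ℝ) → (Fin 3 → ℝ)) : Prop :=
  ∀ ni nj, (ni = n1 ∨ ni = n2) → (nj = n1 ∨ nj = n2) → ∀ p : Fin 3 → ℝ,
    fderiv ℝ (fun q => rMet (ni q) (nj q)) p (v p)
      - rMet (lieBracket v ni p) (nj p) - rMet (ni p) (lieBracket v nj p) = 0

/-! The frame `n1, n2` is `r`-orthonormal, so the functions `r(nᵢ, nⱼ)` are constant and the Lie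
derivative of `r` along `v` vanishes on `𝒩` as soon as `ad v` acts on the frame by a skew
matrix. The field `t0` rotates the frame, `[t0, n1] = -n2` and `[t0, n2] = n1`, while `t1`, `t2`,
`t3` commute with both `n1` and `n2`. -/

namespace NilpotentDisc

theorem fderiv_apply_coord {ι : Type*} [Fintype ι] (i : ι) (p w : ι → ℝ) :
    fderiv ℝ (fun q : ι → ℝ => q i) p w = w i := by
  rw [(hasFDerivAt_apply i p).fderiv]
  rfl

theorem fderiv_vecCons₃_apply {E : Type*} [NormedAddCommGroup E] [NormedSpace ℝ E]
    {f g h : E → ℝ} {p : E} (hf : DifferentiableAt ℝ f p) (hg : DifferentiableAt ℝ g p)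
    (hh : DifferentiableAt ℝ h p) (w : E) :
    fderiv ℝ (fun q => ![f q, g q, h q]) p w =
      ![fderiv ℝ f p w, fderiv ℝ g p w, fderiv ℝ h p w] := by
  have hderiv : HasFDerivAt (fun q => ![f q, g q, h q])
      (ContinuousLinearMap.pi ![fderiv ℝ f p, fderiv ℝ g p, fderiv ℝ h p]) p := by
    refine hasFDerivAt_pi'' fun i => ?_
    fin_cases i <;> simpa using DifferentiableAt.hasFDerivAt ‹_›
  rw [hderiv.fderiv]
  ext i
  fin_cases i <;> rfl

def IsInfinitesimalSymmetry (v : (Fin 3 → ℝ) → (Fin 3 → ℝ)) : Prop :=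
  PreservesDistribution v ∧ MetricLieDerivZero v

theorem isInfinitesimalSymmetry_of_lieBracket_rotation {v : (Fin 3 → ℝ) → (Fin 3 → ℝ)}
    (ω : ℝ) (h1 : lieBracket v n1 = -ω • n2) (h2 : lieBracket v n2 = ω • n1) :
    IsInfinitesimalSymmetry v := by
  constructor
  · rintro n (rfl | rfl)
    · exact ⟨0, fun _ => -ω, by ext p : 1; simp [h1]⟩
    · exact ⟨fun _ => ω, 0, by ext p : 1; simp [h2]⟩
  · rintro ni nj (rfl | rfl) (rfl | rfl) p <;> simp [h1, h2, rMet, n1, n2]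

theorem isInfinitesimalSymmetry_of_lieBracket_eq_zero {v : (Fin 3 → ℝ) → (Fin 3 → ℝ)}
    (h1 : lieBracket v n1 = 0) (h2 : lieBracket v n2 = 0) : IsInfinitesimalSymmetry v :=
  isInfinitesimalSymmetry_of_lieBracket_rotation 0 (by simp [h1]) (by simp [h2])

theorem fderiv_n1 (p : Fin 3 → ℝ) : fderiv ℝ n1 p = 0 :=
  fderiv_const_apply _

theorem fderiv_n2_apply (p w : Fin 3 → ℝ) : fderiv ℝ n2 p w = ![0, w 2, 0] := by
  unfold n2
  rw [fderiv_vecCons₃_apply (by fun_prop) (by fun_prop) (by fun_prop)]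
  simp [fderiv_apply_coord]

theorem lieBracket_const_n1 (c : Fin 3 → ℝ) : lieBracket (fun _ => c) n1 = 0 := by
  ext p : 1
  simp [lieBracket, fderiv_n1]

theorem lieBracket_const_n2 (c : Fin 3 → ℝ) (hc : c 2 = 0) :
    lieBracket (fun _ => c) n2 = 0 := by
  ext p : 1
  simp [lieBracket, fderiv_n2_apply, hc]

noncomputable def t0 : (Fin 3 → ℝ) → (Fin 3 → ℝ) :=
  fun p => ![p 2, (p 2 ^ 2 - p 0 ^ 2) / 2, -(p 0)]

def t2 : (Fin 3 → ℝ) → (Fin 3 → ℝ) := fun p => ![0, p 0, 1]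

theorem fderiv_t0_apply (p w : Fin 3 → ℝ) :
    fderiv ℝ t0 p w = ![w 2, p 2 * w 2 - p 0 * w 0, -w 0] := by
  unfold t0
  rw [fderiv_vecCons₃_apply (by fun_prop) (by fun_prop) (by fun_prop)]
  simp (disch := fun_prop) only [div_eq_mul_inv, fderiv_mul_const, fderiv_fun_sub, fderiv_fun_pow,
    fderiv_fun_neg, fderiv_apply_coord, smul_apply, sub_apply, neg_apply]
  ext i
  fin_cases i <;> simp
  ring

theorem fderiv_t2_apply (p w : Fin 3 → ℝ) : fderiv ℝ t2 p w = ![0, w 0, 0] := by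
  unfold t2
  rw [fderiv_vecCons₃_apply (by fun_prop) (by fun_prop) (by fun_prop)]
  simp [fderiv_apply_coord]

theorem lieBracket_t0_n1 : lieBracket t0 n1 = -n2 := by
  ext p i
  fin_cases i <;> simp [lieBracket, fderiv_n1, fderiv_t0_apply, n1, n2]

theorem lieBracket_t0_n2 : lieBracket t0 n2 = n1 := by
  ext p i
  fin_cases i <;> simp [lieBracket, fderiv_n2_apply, fderiv_t0_apply, t0, n1, n2]

theorem lieBracket_t2_n1 : lieBracket t2 n1 = 0 := by
  ext p i
  fin_cases i <;> simp [lieBracket, fderiv_n1, fderiv_t2_apply, n1]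

theorem lieBracket_t2_n2 : lieBracket t2 n2 = 0 := by
  ext p i
  fin_cases i <;> simp [lieBracket, fderiv_n2_apply, fderiv_t2_apply, t2, n2]

end NilpotentDisc

open NilpotentDisc

/-- Each of `t0 = θ∂_x + ((θ²-x²)/2)∂_y - x∂_θ`, `t1 = ∂_x`, `t2 = x∂_y + ∂_θ`,
`t3 = ∂_y` preserves `𝒩` and has vanishing Lie derivative of `r` on `𝒩`. -/
theorem infinitesimal_symmetries_of_nilpotent_disc :
    let t0 : (Fin 3 → ℝ) → (Fin 3 → ℝ) := fun p => ![p 2, (p 2 ^ 2 - p 0 ^ 2) / 2, -(p 0)]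
    let t1 : (Fin 3 → ℝ) → (Fin 3 → ℝ) := fun _ => ![1, 0, 0]
    let t2 : (Fin 3 → ℝ) → (Fin 3 → ℝ) := fun p => ![0, p 0, 1]
    let t3 : (Fin 3 → ℝ) → (Fin 3 → ℝ) := fun _ => ![0, 1, 0]
    ∀ t, (t = t0 ∨ t = t1 ∨ t = t2 ∨ t = t3) →
      PreservesDistribution t ∧ MetricLieDerivZero t := by
  intro t0 t1 t2 t3 t ht
  rcases ht with rfl | rfl | rfl | rfl
  · exact isInfinitesimalSymmetry_of_lieBracket_rotation 1
      (by rw [neg_smul, one_smul]; exact lieBracket_t0_n1)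
      (by rw [one_smul]; exact lieBracket_t0_n2)
  · exact isInfinitesimalSymmetry_of_lieBracket_eq_zero (lieBracket_const_n1 _)
      (lieBracket_const_n2 _ rfl)
  · exact isInfinitesimalSymmetry_of_lieBracket_eq_zero lieBracket_t2_n1 lieBracket_t2_n2
  · exact isInfinitesimalSymmetry_of_lieBracket_eq_zero (lieBracket_const_n1 _)
      (lieBracket_const_n2 _ rfl)
end

section
/- Any vector field v = f1 n1 + f2 n2 + f3 n3 on ℝ³ (with n1 = ∂_θ, n2 = ∂_x + θ∂_y, n3 = ∂_y) preserving the distribution 𝒩 = span{n1, n2} and the metric r = dx² + dθ² is an ℝ-linear combination of t0 = θ∂_x + ((θ²-x²)/2)∂_y - x∂_θ, t1 = ∂_x, t2 = x∂_y + ∂_θ, and t3 = ∂_y; in particular, the symmetry algebra is 4-dimensional. -/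
open Real

/-- `n3 = ∂_y`. -/
def n3 : (Fin 3 → ℝ) → (Fin 3 → ℝ) := fun _ => ![0, 1, 0]

abbrev EE := Fin 3 → ℝ
noncomputable def pr (i : Fin 3) : EE →L[ℝ] ℝ := ContinuousLinearMap.proj i
lemma hasFDerivAt_coord (i : Fin 3) (p : EE) : HasFDerivAt (fun q : EE => q i) (pr i) p :=
  (pr i).hasFDerivAt
lemma pr_apply (i : Fin 3) (w : EE) : pr i w = w i := rfl
def ex : EE := ![1, 0, 0]
def ey : EE := ![0, 1, 0]
def et : EE := ![0, 0, 1]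
lemma contDiff_D {g : EE → ℝ} (hg : ContDiff ℝ (⊤ : ℕ∞) g) (w : EE) :
    ContDiff ℝ (⊤ : ℕ∞) fun p : EE => fderiv ℝ g p w :=
  (hg.fderiv_right (m := (⊤ : ℕ∞)) (by simp)).clm_apply contDiff_const
lemma symm_D {g : EE → ℝ} (hg : ContDiff ℝ (⊤ : ℕ∞) g) (p u w : EE) :
    fderiv ℝ (fun q => fderiv ℝ g q w) p u = fderiv ℝ (fun q => fderiv ℝ g q u) p w := by
  have hd : Differentiable ℝ g := hg.differentiable (by simp)
  have hd' : DifferentiableAt ℝ (fderiv ℝ g) p :=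
    ((hg.fderiv_right (m := (⊤ : ℕ∞)) (by simp)).differentiable (by simp)).differentiableAt
  have key : ∀ w : EE, fderiv ℝ (fun q => fderiv ℝ g q w) p
      = (fderiv ℝ (fderiv ℝ g) p).flip w := by
    intro w
    rw [fderiv_clm_apply hd' (differentiableAt_const w)]
    simp
  rw [key, key]
  exact second_derivative_symmetric (fun y => hd.differentiableAt.hasFDerivAt)
    hd'.hasFDerivAt u w


lemma key_diff {A B C : EE → ℝ} (hA : Differentiable ℝ A) (hB : Differentiable ℝ B)
    (hC : Differentiable ℝ C) (h : ∀ q, A q + q 2 * B q - C q = 0) (p u : EE) :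
    fderiv ℝ A p u + (u 2 * B p + p 2 * fderiv ℝ B p u) - fderiv ℝ C p u = 0 := by
  have h1 : HasFDerivAt (fun q : EE => A q + q 2 * B q - C q)
      ((fderiv ℝ A p + ((p 2) • fderiv ℝ B p + (B p) • pr 2)) - fderiv ℝ C p) p :=
    (hA.differentiableAt.hasFDerivAt.add
      ((hasFDerivAt_coord 2 p).mul hB.differentiableAt.hasFDerivAt)).sub
      hC.differentiableAt.hasFDerivAt
  have h0 : HasFDerivAt (fun q : EE => A q + q 2 * B q - C q) (0 : EE →L[ℝ] ℝ) p := by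
    rw [show (fun q : EE => A q + q 2 * B q - C q) = fun _ => (0:ℝ) from funext h]
    exact hasFDerivAt_const _ _
  have := h1.unique h0
  have h2 := congrArg (fun L : EE →L[ℝ] ℝ => L u) this
  simp [pr_apply] at h2
  linarith [h2]

lemma fderiv_poly_add {g : EE → ℝ} (hg : Differentiable ℝ g) (a b c d : ℝ) (p u : EE) :
    fderiv ℝ (fun q => g q + (a * q 0 + b * q 2 + c * (q 0 * q 0) + d * (q 2 * q 2))) p u
      = fderiv ℝ g p u + (a * u 0 + b * u 2 + 2 * c * p 0 * u 0 + 2 * d * p 2 * u 2) := by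
  have H : HasFDerivAt
      (fun q : EE => g q + (a * q 0 + b * q 2 + c * (q 0 * q 0) + d * (q 2 * q 2)))
      (fderiv ℝ g p + (a • pr 0 + b • pr 2 + c • (p 0 • pr 0 + p 0 • pr 0)
        + d • (p 2 • pr 2 + p 2 • pr 2))) p :=
    hg.differentiableAt.hasFDerivAt.add
      (((((hasFDerivAt_coord 0 p).const_mul a).add ((hasFDerivAt_coord 2 p).const_mul b)).add
        (((hasFDerivAt_coord 0 p).mul (hasFDerivAt_coord 0 p)).const_mul c)).add
        (((hasFDerivAt_coord 2 p).mul (hasFDerivAt_coord 2 p)).const_mul d))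
  rw [H.fderiv]
  simp [pr_apply]
  ring

lemma diff_poly (a b c d : ℝ) :
    Differentiable ℝ (fun q : EE => a * q 0 + b * q 2 + c * (q 0 * q 0) + d * (q 2 * q 2)) := by
  have h0 : Differentiable ℝ (fun q : EE => q 0) := fun p => (hasFDerivAt_coord 0 p).differentiableAt
  have h2 : Differentiable ℝ (fun q : EE => q 2) := fun p => (hasFDerivAt_coord 2 p).differentiableAt
  fun_prop

lemma basis_decomp (w : EE) : w = w 0 • ex + w 1 • ey + w 2 • et := by
  funext i; fin_cases i <;> simp [ex, ey, et]

lemma const_of_partials {g : EE → ℝ} (hg : Differentiable ℝ g)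
    (h0 : ∀ p, fderiv ℝ g p ex = 0) (h1 : ∀ p, fderiv ℝ g p ey = 0)
    (h2 : ∀ p, fderiv ℝ g p et = 0) (p : EE) : g p = g 0 := by
  apply is_const_of_fderiv_eq_zero hg
  intro x
  ext w
  rw [show (fderiv ℝ g x) w = fderiv ℝ g x (w 0 • ex + w 1 • ey + w 2 • et) by
    rw [← basis_decomp]]
  simp [map_add, h0, h1, h2]


/-- Any smooth vector field `v = f1 n1 + f2 n2 + f3 n3` preserving the distribution
`𝒩 = span{n1, n2}` and the metric `r` is a real linear combination of
`t0 = θ∂_x + ((θ²-x²)/2)∂_y - x∂_θ`, `t1 = ∂_x`, `t2 = x∂_y + ∂_θ`, `t3 = ∂_y`. -/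
theorem symmetry_algebra_four_dimensional
    (f1 f2 f3 : (Fin 3 → ℝ) → ℝ)
    (hf1 : ContDiff ℝ (⊤ : ℕ∞) f1) (hf2 : ContDiff ℝ (⊤ : ℕ∞) f2) (hf3 : ContDiff ℝ (⊤ : ℕ∞) f3)
    (v : (Fin 3 → ℝ) → (Fin 3 → ℝ))
    (hv : v = fun p => f1 p • n1 p + f2 p • n2 p + f3 p • n3 p)
    (hdist : ∀ n, (n = n1 ∨ n = n2) → ∃ a b : (Fin 3 → ℝ) → ℝ,
      lieBracket v n = fun p => a p • n1 p + b p • n2 p)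
    (hmet : ∀ ni nj, (ni = n1 ∨ ni = n2) → (nj = n1 ∨ nj = n2) → ∀ p : Fin 3 → ℝ,
      fderiv ℝ (fun q => rMet (ni q) (nj q)) p (v p)
        - rMet (lieBracket v ni p) (nj p) - rMet (ni p) (lieBracket v nj p) = 0) :
    ∃ c0 c1 c2 c3 : ℝ, v = fun p =>
      c0 • (![p 2, (p 2 ^ 2 - p 0 ^ 2) / 2, -(p 0)] : Fin 3 → ℝ)
      + c1 • (![1, 0, 0] : Fin 3 → ℝ)
      + c2 • (![0, p 0, 1] : Fin 3 → ℝ)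
      + c3 • (![0, 1, 0] : Fin 3 → ℝ) := by
  have d1 : Differentiable ℝ f1 := hf1.differentiable (by simp)
  have d2 : Differentiable ℝ f2 := hf2.differentiable (by simp)
  have d3 : Differentiable ℝ f3 := hf3.differentiable (by simp)
  -- components of v
  have hc0 : (fun q => v q 0) = f2 := by
    funext q; simp [hv, n1, n2, n3]
  have hc1 : (fun q => v q 1) = fun q => f2 q * q 2 + f3 q := by
    funext q; simp [hv, n1, n2, n3]
  have hc2 : (fun q => v q 2) = f1 := by
    funext q; simp [hv, n1, n2, n3]
  -- derivative of v
  have hDv : ∀ (p w : EE), fderiv ℝ v p w =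
      ![fderiv ℝ f2 p w, fderiv ℝ f2 p w * p 2 + f2 p * w 2 + fderiv ℝ f3 p w,
        fderiv ℝ f1 p w] := by
    intro p w
    have hdiff : ∀ i, DifferentiableAt ℝ (fun x => v x i) p := by
      intro i
      fin_cases i
      · show DifferentiableAt ℝ (fun x => v x 0) p
        rw [hc0]; exact d2.differentiableAt
      · show DifferentiableAt ℝ (fun x => v x 1) p
        rw [hc1]
        exact ((d2.differentiableAt.mul (hasFDerivAt_coord 2 p).differentiableAt).add
          d3.differentiableAt)
      · show DifferentiableAt ℝ (fun x => v x 2) p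
        rw [hc2]; exact d1.differentiableAt
    rw [fderiv_pi hdiff]
    funext i
    rw [ContinuousLinearMap.pi_apply]
    fin_cases i
    · show fderiv ℝ (fun q => v q 0) p w = fderiv ℝ f2 p w
      rw [hc0]
    · show fderiv ℝ (fun q => v q 1) p w
        = fderiv ℝ f2 p w * p 2 + f2 p * w 2 + fderiv ℝ f3 p w
      rw [hc1]
      have H : HasFDerivAt (fun q : EE => f2 q * q 2 + f3 q)
          ((f2 p • pr 2 + p 2 • fderiv ℝ f2 p) + fderiv ℝ f3 p) p :=
        (d2.differentiableAt.hasFDerivAt.mul (hasFDerivAt_coord 2 p)).add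
          d3.differentiableAt.hasFDerivAt
      rw [H.fderiv]
      simp [pr_apply]
      ring
    · show fderiv ℝ (fun q => v q 2) p w = fderiv ℝ f1 p w
      rw [hc2]
  -- Lie bracket with n1
  have hL1 : ∀ p : EE, lieBracket v n1 p =
      -![fderiv ℝ f2 p et, fderiv ℝ f2 p et * p 2 + f2 p + fderiv ℝ f3 p et,
        fderiv ℝ f1 p et] := by
    intro p
    unfold lieBracket
    have hco : fderiv ℝ n1 p = 0 := fderiv_const_apply _
    rw [hco]
    simp only [ContinuousLinearMap.zero_apply, zero_sub, neg_inj]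
    rw [show n1 p = et from rfl, hDv p et]
    funext i; fin_cases i <;> simp [et]
  -- Lie bracket with n2
  have hn2eq : n2 = fun q : EE => ex + q 2 • ey := by
    funext q i; fin_cases i <;> simp [n2, ex, ey]
  have hDn2 : ∀ p : EE, fderiv ℝ n2 p = (pr 2).smulRight ey := by
    intro p
    rw [hn2eq]
    have H : HasFDerivAt (fun q : EE => ex + q 2 • ey)
        ((0 : EE →L[ℝ] EE) + (pr 2).smulRight ey) p :=
      (hasFDerivAt_const ex p).add ((hasFDerivAt_coord 2 p).smul_const ey)
    rw [H.fderiv, zero_add]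
  have hL2 : ∀ p : EE, lieBracket v n2 p =
      ![0, f1 p, 0] -
      ![fderiv ℝ f2 p ![1, p 2, 0],
        fderiv ℝ f2 p ![1, p 2, 0] * p 2 + fderiv ℝ f3 p ![1, p 2, 0],
        fderiv ℝ f1 p ![1, p 2, 0]] := by
    intro p
    unfold lieBracket
    rw [hDn2 p]
    have h1 : ((pr 2).smulRight ey) (v p) = ![0, f1 p, 0] := by
      have hvp2 : v p 2 = f1 p := congrFun hc2 p
      rw [ContinuousLinearMap.smulRight_apply, pr_apply, hvp2]
      funext i; fin_cases i <;> simp [ey]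
    rw [h1, show n2 p = ![1, p 2, 0] from rfl, hDv p ![1, p 2, 0]]
    congr 1
    funext i; fin_cases i <;> simp
  -- decomposition of derivative in direction ![1, p 2, 0]
  have hdir : ∀ (g : EE → ℝ) (p : EE),
      fderiv ℝ g p ![1, p 2, 0] = fderiv ℝ g p ex + p 2 * fderiv ℝ g p ey := by
    intro g p
    rw [show (![1, p 2, 0] : EE) = ex + p 2 • ey from by
      funext i; fin_cases i <;> simp [ex, ey]]
    rw [map_add, map_smul, smul_eq_mul]
  -- Q1 : ∂θ f1 = 0
  have Q1 : ∀ p : EE, fderiv ℝ f1 p et = 0 := by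
    intro p
    have h := hmet n1 n1 (Or.inl rfl) (Or.inl rfl) p
    rw [show (fun q => rMet (n1 q) (n1 q)) = fun _ => (1:ℝ) from by
      funext q; simp [rMet, n1], hL1 p] at h
    simp [rMet, n1, et] at h
    simp only [ex, ey, et]
    linarith [h]
  -- Q2 : ∂x f2 + θ ∂y f2 = 0
  have Q2 : ∀ p : EE, fderiv ℝ f2 p ex + p 2 * fderiv ℝ f2 p ey = 0 := by
    intro p
    have h := hmet n2 n2 (Or.inr rfl) (Or.inr rfl) p
    rw [show (fun q => rMet (n2 q) (n2 q)) = fun _ => (1:ℝ) from by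
      funext q; simp [rMet, n2], hL2 p] at h
    simp [rMet, n2] at h
    rw [← hdir f2 p]
    linarith [h]
  -- Q3 : ∂θ f2 + (∂x f1 + θ ∂y f1) = 0
  have Q3 : ∀ p : EE, fderiv ℝ f2 p et + (fderiv ℝ f1 p ex + p 2 * fderiv ℝ f1 p ey) = 0 := by
    intro p
    have h := hmet n1 n2 (Or.inl rfl) (Or.inr rfl) p
    rw [show (fun q => rMet (n1 q) (n2 q)) = fun _ => (0:ℝ) from by
      funext q; simp [rMet, n1, n2], hL1 p, hL2 p] at h
    simp [rMet, n1, n2, et] at h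
    rw [← hdir f1 p]
    simp only [ex, ey, et]
    linarith [h]
  -- Q4 : f2 + ∂θ f3 = 0
  have Q4 : ∀ p : EE, f2 p + fderiv ℝ f3 p et = 0 := by
    intro p
    obtain ⟨a, b, hab⟩ := hdist n1 (Or.inl rfl)
    have h := congrFun hab p
    rw [hL1 p] at h
    have h0 := congrFun h 0
    have h1 := congrFun h 1
    simp [n1, n2] at h0 h1
    rw [← h0] at h1
    linarith [h1]
  -- Q5 : ∂x f3 + θ ∂y f3 - f1 = 0
  have Q5 : ∀ p : EE, fderiv ℝ f3 p ex + p 2 * fderiv ℝ f3 p ey - f1 p = 0 := by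
    intro p
    obtain ⟨a, b, hab⟩ := hdist n2 (Or.inr rfl)
    have h := congrFun hab p
    rw [hL2 p] at h
    have h0 := congrFun h 0
    have h1 := congrFun h 1
    simp [n1, n2] at h0 h1
    rw [← h0] at h1
    rw [← hdir f3 p]
    linarith [h1]
  -- component value lemmas
  have exv0 : ex 0 = 1 := rfl
  have exv2 : ex 2 = 0 := rfl
  have eyv0 : ey 0 = 0 := rfl
  have eyv2 : ey 2 = 0 := rfl
  have etv0 : et 0 = 0 := rfl
  have etv2 : et 2 = 1 := rfl
  have dD1 : ∀ w, Differentiable ℝ (fun p : EE => fderiv ℝ f1 p w) :=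
    fun w => (contDiff_D hf1 w).differentiable (by simp)
  have dD2 : ∀ w, Differentiable ℝ (fun p : EE => fderiv ℝ f2 p w) :=
    fun w => (contDiff_D hf2 w).differentiable (by simp)
  have dD3 : ∀ w, Differentiable ℝ (fun p : EE => fderiv ℝ f3 p w) :=
    fun w => (contDiff_D hf3 w).differentiable (by simp)
  -- G1 : ∂y f3 = 0
  have G1 : ∀ p : EE, fderiv ℝ f3 p ey = 0 := by
    intro p
    have h := key_diff (A := fun q => fderiv ℝ f3 q ex) (B := fun q => fderiv ℝ f3 q ey)
      (C := f1) (dD3 ex) (dD3 ey) d1 Q5 p et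
    rw [symm_D hf3 p et ex, symm_D hf3 p et ey] at h
    rw [show (fun q : EE => fderiv ℝ f3 q et) = fun q => -f2 q from
      funext fun q => by linarith [Q4 q]] at h
    rw [fderiv_fun_neg] at h
    simp only [ContinuousLinearMap.neg_apply, etv2] at h
    linarith [Q1 p, Q2 p, h]
  -- G2 : ∂y f1 = 0
  have G2 : ∀ p : EE, fderiv ℝ f1 p ey = 0 := by
    intro p
    have h := key_diff (A := fun q => fderiv ℝ f3 q ex) (B := fun q => fderiv ℝ f3 q ey)
      (C := f1) (dD3 ex) (dD3 ey) d1 Q5 p ey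
    rw [symm_D hf3 p ey ex] at h
    rw [show (fun q : EE => fderiv ℝ f3 q ey) = fun _ => (0:ℝ) from funext G1] at h
    simp only [fderiv_fun_const, Pi.zero_apply, ContinuousLinearMap.zero_apply, eyv2] at h
    linarith [G1 p, h]
  -- G3 : ∂y f2 = 0
  have G3 : ∀ p : EE, fderiv ℝ f2 p ey = 0 := by
    intro p
    rw [show f2 = fun q => -(fderiv ℝ f3 q et) from funext fun q => by linarith [Q4 q]]
    rw [fderiv_fun_neg]
    simp only [ContinuousLinearMap.neg_apply]
    rw [symm_D hf3 p ey et]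
    rw [show (fun q : EE => fderiv ℝ f3 q ey) = fun _ => (0:ℝ) from funext G1]
    simp
  -- G4 : ∂x f2 = 0
  have G4 : ∀ p : EE, fderiv ℝ f2 p ex = 0 := by
    intro p
    have h := Q2 p
    rw [G3 p, mul_zero] at h
    linarith
  -- G5 : ∂x f1 = -∂θ f2
  have G5 : ∀ p : EE, fderiv ℝ f1 p ex = -(fderiv ℝ f2 p et) := by
    intro p
    have h := Q3 p
    rw [G2 p, mul_zero] at h
    linarith
  -- G6 : ∂x f3 = f1
  have G6 : ∀ p : EE, fderiv ℝ f3 p ex = f1 p := by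
    intro p
    have h := Q5 p
    rw [G1 p, mul_zero] at h
    linarith
  -- ∂x f1 is constant
  have hgx : ∀ p : EE, fderiv ℝ (fun q : EE => fderiv ℝ f1 q ex) p ex = 0 := by
    intro p
    rw [show (fun q : EE => fderiv ℝ f1 q ex) = fun q => -(fderiv ℝ f2 q et) from funext G5]
    rw [fderiv_fun_neg]
    simp only [ContinuousLinearMap.neg_apply]
    rw [symm_D hf2 p ex et]
    rw [show (fun q : EE => fderiv ℝ f2 q ex) = fun _ => (0:ℝ) from funext G4]
    simp
  have hgy : ∀ p : EE, fderiv ℝ (fun q : EE => fderiv ℝ f1 q ex) p ey = 0 := by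
    intro p
    rw [symm_D hf1 p ey ex]
    rw [show (fun q : EE => fderiv ℝ f1 q ey) = fun _ => (0:ℝ) from funext G2]
    simp
  have hgt : ∀ p : EE, fderiv ℝ (fun q : EE => fderiv ℝ f1 q ex) p et = 0 := by
    intro p
    rw [symm_D hf1 p et ex]
    rw [show (fun q : EE => fderiv ℝ f1 q et) = fun _ => (0:ℝ) from funext Q1]
    simp
  obtain ⟨D, hD⟩ : ∃ D : ℝ, ∀ p : EE, fderiv ℝ f1 p ex = D :=
    ⟨fderiv ℝ f1 0 ex, fun p => const_of_partials (dD1 ex) hgx hgy hgt p⟩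
  -- form of f1
  obtain ⟨A1, hA1⟩ : ∃ A : ℝ, ∀ p : EE, f1 p = A + D * p 0 := by
    refine ⟨f1 0, fun p => ?_⟩
    have hdiff : Differentiable ℝ (fun q : EE =>
        f1 q + ((-D) * q 0 + 0 * q 2 + 0 * (q 0 * q 0) + 0 * (q 2 * q 2))) :=
      d1.add (diff_poly _ _ _ _)
    have key := const_of_partials hdiff
      (fun p => by
        rw [fderiv_poly_add d1]
        simp only [exv0, exv2]
        rw [hD p]; ring)
      (fun p => by
        rw [fderiv_poly_add d1]
        simp only [eyv0, eyv2]
        rw [G2 p]; ring)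
      (fun p => by
        rw [fderiv_poly_add d1]
        simp only [etv0, etv2]
        rw [Q1 p]; ring) p
    simp only [Pi.zero_apply] at key
    nlinarith [key]
  -- form of f2
  obtain ⟨A2, hA2⟩ : ∃ A : ℝ, ∀ p : EE, f2 p = A - D * p 2 := by
    refine ⟨f2 0, fun p => ?_⟩
    have hDt2 : ∀ p : EE, fderiv ℝ f2 p et = -D := by
      intro p
      have := G5 p
      rw [hD p] at this
      linarith
    have hdiff : Differentiable ℝ (fun q : EE =>
        f2 q + (0 * q 0 + D * q 2 + 0 * (q 0 * q 0) + 0 * (q 2 * q 2))) :=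
      d2.add (diff_poly _ _ _ _)
    have key := const_of_partials hdiff
      (fun p => by
        rw [fderiv_poly_add d2]
        simp only [exv0, exv2]
        rw [G4 p]; ring)
      (fun p => by
        rw [fderiv_poly_add d2]
        simp only [eyv0, eyv2]
        rw [G3 p]; ring)
      (fun p => by
        rw [fderiv_poly_add d2]
        simp only [etv0, etv2]
        rw [hDt2 p]; ring) p
    simp only [Pi.zero_apply] at key
    nlinarith [key]
  -- form of f3
  obtain ⟨A3, hA3⟩ : ∃ A : ℝ, ∀ p : EE,
      f3 p = A + A1 * p 0 - A2 * p 2 + (D / 2) * (p 0 * p 0) + (D / 2) * (p 2 * p 2) := by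
    refine ⟨f3 0, fun p => ?_⟩
    have hdiff : Differentiable ℝ (fun q : EE =>
        f3 q + ((-A1) * q 0 + A2 * q 2 + (-(D/2)) * (q 0 * q 0) + (-(D/2)) * (q 2 * q 2))) :=
      d3.add (diff_poly _ _ _ _)
    have hDt3 : ∀ p : EE, fderiv ℝ f3 p et = -A2 + D * p 2 := by
      intro p
      have h4 := Q4 p
      rw [hA2 p] at h4
      linarith
    have key := const_of_partials hdiff
      (fun p => by
        rw [fderiv_poly_add d3]
        simp only [exv0, exv2]
        rw [G6 p, hA1 p]; ring)
      (fun p => by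
        rw [fderiv_poly_add d3]
        simp only [eyv0, eyv2]
        rw [G1 p]; ring)
      (fun p => by
        rw [fderiv_poly_add d3]
        simp only [etv0, etv2]
        rw [hDt3 p]; ring) p
    simp only [Pi.zero_apply] at key
    nlinarith [key]
  -- conclusion
  refine ⟨-D, A2, A1, A3, ?_⟩
  rw [hv]
  funext p i
  fin_cases i
  · show f1 p • n1 p 0 + f2 p • n2 p 0 + f3 p • n3 p 0 = _
    simp [n1, n2, n3, hA1 p, hA2 p, hA3 p]
    ring
  · show f1 p • n1 p 1 + f2 p • n2 p 1 + f3 p • n3 p 1 = _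
    simp [n1, n2, n3, hA1 p, hA2 p, hA3 p]
    ring
  · show f1 p • n1 p 2 + f2 p • n2 p 2 + f3 p • n3 p 2 = _
    simp [n1, n2, n3, hA1 p, hA2 p, hA3 p]
    ring
end

section
/- For constants C1 ≠ 0, C2, C3 with C2² + C3² ≠ 0, the nilpotent geodesic x(t) = (1/C1)(C3 - C2 sin(C1 t) - C3 cos(C1 t)), θ(t) = (1/C1)(C2 - C2 cos(C1 t) + C3 sin(C1 t)) satisfies x(t) = θ(t) = 0 if and only if C1 t ∈ 2πℤ; in particular, the first positive time at which x(t) = θ(t) = 0 is t = 2π/|C1|. -/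
/-!
Writing `s = C1 t`, the vector `C1 (x, θ)` is the image of `(1 - cos s, sin s)` under the linear map
with matrix `[[C3, -C2], [C2, C3]]`, whose determinant `C2² + C3²` is nonzero. So `x = θ = 0` iff
`cos s = 1`, i.e. `s ∈ 2πℤ`. A positive time `t` with `C1 t = 2πk` has `k ≠ 0`, hence
`|C1| t = 2π |k| ≥ 2π`, and `k = sign C1` attains the bound.
-/

open Real

theorem mul_sub_mul_eq_zero_and_mul_add_mul_eq_zero_iff {a b u v : ℝ} (hab : a ^ 2 + b ^ 2 ≠ 0) :
    (b * u - a * v = 0 ∧ a * u + b * v = 0) ↔ (u = 0 ∧ v = 0) := by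
  constructor
  · rintro ⟨h₁, h₂⟩
    have hu : (a ^ 2 + b ^ 2) * u = 0 := by linear_combination b * h₁ + a * h₂
    have hv : (a ^ 2 + b ^ 2) * v = 0 := by linear_combination b * h₂ - a * h₁
    exact ⟨(mul_eq_zero.1 hu).resolve_left hab, (mul_eq_zero.1 hv).resolve_left hab⟩
  · rintro ⟨rfl, rfl⟩
    simp

theorem one_sub_cos_eq_zero_and_sin_eq_zero_iff (s : ℝ) :
    (1 - cos s = 0 ∧ sin s = 0) ↔ ∃ k : ℤ, s = 2 * π * k := by
  have hsin : cos s = 1 → sin s = 0 := fun h => by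
    nlinarith [sin_sq_add_cos_sq s]
  rw [sub_eq_zero, eq_comm, and_iff_left_of_imp hsin, cos_eq_one_iff]
  exact exists_congr fun k => by rw [eq_comm, mul_comm]

theorem geodesic_eq_zero_iff {c a b : ℝ} (hc : c ≠ 0) (hab : a ^ 2 + b ^ 2 ≠ 0) (t : ℝ) :
    ((1 / c) * (b - a * sin (c * t) - b * cos (c * t)) = 0 ∧
        (1 / c) * (a - a * cos (c * t) + b * sin (c * t)) = 0) ↔
      ∃ k : ℤ, c * t = 2 * π * k := by
  simp only [one_div, mul_eq_zero, inv_eq_zero, hc, false_or]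
  rw [show b - a * sin (c * t) - b * cos (c * t) = b * (1 - cos (c * t)) - a * sin (c * t) by ring,
    show a - a * cos (c * t) + b * sin (c * t) = a * (1 - cos (c * t)) + b * sin (c * t) by ring,
    mul_sub_mul_eq_zero_and_mul_add_mul_eq_zero_iff hab, one_sub_cos_eq_zero_and_sin_eq_zero_iff]

theorem exists_int_mul_div_abs_eq {c : ℝ} (hc : c ≠ 0) (p : ℝ) : ∃ k : ℤ, c * (p / |c|) = p * k := by
  rcases hc.lt_or_gt with h | h
  · exact ⟨-1, by rw [abs_of_neg h]; field_simp; push_cast; ring⟩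
  · exact ⟨1, by rw [abs_of_pos h]; field_simp; push_cast; ring⟩

theorem abs_div_abs_le_of_mul_eq_mul_int {c p t : ℝ} {k : ℤ} (hc : c ≠ 0) (ht : 0 < t)
    (h : c * t = p * k) : |p| / |c| ≤ t := by
  have hk : k ≠ 0 := by
    rintro rfl
    simp [hc, ht.ne'] at h
  rw [div_le_iff₀ (abs_pos.2 hc)]
  calc |p| = |p| * 1 := (mul_one _).symm
    _ ≤ |p| * |(k : ℝ)| := by gcongr; exact_mod_cast Int.one_le_abs hk
    _ = t * |c| := by rw [← abs_mul, ← h, abs_mul, abs_of_pos ht, mul_comm]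

/-- For `C1 ≠ 0`, `(C2, C3) ≠ (0,0)`, the nilpotent geodesic components
`x(t) = (1/C1)(C3 - C2 sin(C1 t) - C3 cos(C1 t))`,
`θ(t) = (1/C1)(C2 - C2 cos(C1 t) + C3 sin(C1 t))` vanish simultaneously iff
`C1 t ∈ 2πℤ`; in particular the first positive such time is `t = 2π/|C1|`. -/
theorem geodesic_return_times (C1 C2 C3 : ℝ) (hC1 : C1 ≠ 0)
    (hC23 : C2 ^ 2 + C3 ^ 2 ≠ 0) :
    let x : ℝ → ℝ := fun t => (1 / C1) * (C3 - C2 * sin (C1 * t) - C3 * cos (C1 * t))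
    let θ : ℝ → ℝ := fun t => (1 / C1) * (C2 - C2 * cos (C1 * t) + C3 * sin (C1 * t))
    (∀ t : ℝ, (x t = 0 ∧ θ t = 0) ↔ ∃ k : ℤ, C1 * t = 2 * π * k) ∧
    (x (2 * π / |C1|) = 0 ∧ θ (2 * π / |C1|) = 0) ∧
    (∀ t : ℝ, 0 < t → x t = 0 → θ t = 0 → 2 * π / |C1| ≤ t) := by
  intro x θ
  have zero_iff : ∀ t, (x t = 0 ∧ θ t = 0) ↔ ∃ k : ℤ, C1 * t = 2 * π * k :=
    geodesic_eq_zero_iff hC1 hC23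
  refine ⟨zero_iff, (zero_iff _).2 (exists_int_mul_div_abs_eq hC1 _), ?_⟩
  intro t ht hx hθ
  obtain ⟨k, hk⟩ := (zero_iff t).1 ⟨hx, hθ⟩
  simpa only [abs_of_pos two_pi_pos] using abs_div_abs_le_of_mul_eq_mul_int hC1 ht hk
end
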